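/- Let F_{3,3} : ℝ^6 → ℝ^6 be given by F_{3,3}(x,y,u1,u2,u3,u4) = (x³+y³+u1·x+u2·y+u3·x²+u4·y², x·y, u1, u2, u3, u4). Then for every point q = (x,y,u1,u2,u3,u4) ∈ ℝ^6, the derivative of F_{3,3} at q applied to ξ_4(q) = ((1/3)xy, −(1/3)y²−(1/9)u4·y, −(5/3)u3·xy, x³+y³+u1·x+u2·y+u3·x²+u4·y²+(1/9)u2·u4, −2xy, −(2/3)u2+(2/9)u4²) equals η_4(F_{3,3}(q)), where η_4(X,Y,U1,U2,U3,U4) = ((4/3)U1·Y, −(1/9)U4·Y, −(5/3)U3·Y, X+(1/9)U2·U4, −2Y, −(2/3)U2+(2/9)U4²). In particular η_4 is liftable over F_{3,3}. -/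

import Mathlib

/-- The stable map `F₃₃` of discrete algebra type `B_{3,3}`. -/
noncomputable def F33 : ℝ × ℝ × ℝ × ℝ × ℝ × ℝ → ℝ × ℝ × ℝ × ℝ × ℝ × ℝ :=
  fun (x, y, u1, u2, u3, u4) =>
    (x^3 + y^3 + u1*x + u2*y + u3*x^2 + u4*y^2, x*y, u1, u2, u3, u4)

/-- The vector field `η₄` on the target of `F₃₃`. -/
noncomputable def eta4 : ℝ × ℝ × ℝ × ℝ × ℝ × ℝ → ℝ × ℝ × ℝ × ℝ × ℝ × ℝ :=
  fun (X, Y, U1, U2, U3, U4) =>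
    ((4/3)*U1*Y, -(1/9)*U4*Y, -(5/3)*U3*Y, X + (1/9)*U2*U4,
     -2*Y, -(2/3)*U2 + (2/9)*U4^2)

/-- The lowerable vector field `ξ₄` on the source of `F₃₃`. -/
noncomputable def xi4 : ℝ × ℝ × ℝ × ℝ × ℝ × ℝ → ℝ × ℝ × ℝ × ℝ × ℝ × ℝ :=
  fun (x, y, u1, u2, u3, u4) =>
    ((1/3)*x*y, -(1/3)*y^2 - (1/9)*u4*y, -(5/3)*u3*x*y,
     x^3 + y^3 + u1*x + u2*y + u3*x^2 + u4*y^2 + (1/9)*u2*u4,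
     -2*x*y, -(2/3)*u2 + (2/9)*u4^2)

theorem F33_eq_coords :
    F33 = fun q => (q.1 ^ 3 + q.2.1 ^ 3 + q.2.2.1 * q.1 + q.2.2.2.1 * q.2.1 + q.2.2.2.2.1 * q.1 ^ 2
      + q.2.2.2.2.2 * q.2.1 ^ 2, q.1 * q.2.1, q.2.2.1, q.2.2.2.1, q.2.2.2.2.1, q.2.2.2.2.2) :=
  rfl

theorem fderiv_F33_apply (x y u1 u2 u3 u4 a b c d e f : ℝ) :
    fderiv ℝ F33 (x, y, u1, u2, u3, u4) (a, b, c, d, e, f) =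
      ((3 * x ^ 2 + u1 + 2 * u3 * x) * a + (3 * y ^ 2 + u2 + 2 * u4 * y) * b
        + x * c + y * d + x ^ 2 * e + y ^ 2 * f, y * a + x * b, c, d, e, f) := by
  rw [F33_eq_coords]
  simp (disch := fun_prop) only [DifferentiableAt.fderiv_prodMk, fderiv_fun_add, fderiv_fun_mul,
    fderiv_fun_pow, fderiv.fst, fderiv.snd, fderiv_fun_id, ContinuousLinearMap.comp_id,
    ContinuousLinearMap.prod_apply, add_apply, smul_apply,
    ContinuousLinearMap.comp_apply, ContinuousLinearMap.coe_fst', ContinuousLinearMap.coe_snd',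
    nsmul_eq_mul, smul_eq_mul, Prod.mk.injEq, and_true]
  constructor <;> ring

/-- `η₄` is liftable over `F₃₃` via `ξ₄`:
for every `q`, `d(F₃₃)_q (ξ₄ q) = η₄ (F₃₃ q)`. -/
theorem eta4_liftable_over_F33 :
    ∀ q : ℝ × ℝ × ℝ × ℝ × ℝ × ℝ, fderiv ℝ F33 q (xi4 q) = eta4 (F33 q) := by
  rintro ⟨x, y, u1, u2, u3, u4⟩
  rw [xi4, fderiv_F33_apply]
  simp only [F33, eta4, Prod.mk.injEq, true_and, and_true]
  refine ⟨?_, ?_, ?_, ?_⟩ <;> ring
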